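/- Let I ⊆ K[x_0,…,x_n] be a homogeneous ideal and w_1, w_2 ∈ Γ^{n+1} be such that both in_{w_1}(I) and in_{w_2}(I) are monomial ideals. Then in_{w_2}(I) is not strictly contained in in_{w_1}(I). -/

import Mathlib

open MvPolynomial
open scoped Classical

noncomputable section

/-- Dot product `w·u` of a real weight vector with a nonnegative exponent vector. -/
def dotN {m : ℕ} (w : Fin m → ℝ) (u : Fin m →₀ ℕ) : ℝ := ∑ i, w i * (u i : ℝ)

/-- Dot product `w·u` of a real weight vector with an integer exponent vector. -/
def dotZ {n : ℕ} (w : Fin n → ℝ) (u : Fin n → ℤ) : ℝ := ∑ i, w i * (u i : ℝ)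

/-- Dot product of two real vectors. -/
def dotR {m : ℕ} (c x : Fin m → ℝ) : ℝ := ∑ i, c i * x i

/-- A field `K` together with: a nontrivial real-valued (additive) valuation
`val : K* → ℝ` (recorded as a function on `K`, constrained only at nonzero elements);
a residue field `𝕜` with the reduction map `res : K → 𝕜` (the canonical map
`R → 𝕜 = R/𝔪` on the valuation ring `R = {a : val a ≥ 0}`, junk elsewhere); and a fixed
splitting `t` of the valuation, i.e. a group-homomorphic section `w ↦ t^w` of `val`
defined on the value group `Γ = im val`. -/
structure ValSetup (K 𝕜 : Type) [Field K] [Field 𝕜] where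
  val : K → ℝ
  val_mul : ∀ {a b : K}, a ≠ 0 → b ≠ 0 → val (a * b) = val a + val b
  val_add : ∀ {a b : K}, a ≠ 0 → b ≠ 0 → a + b ≠ 0 → min (val a) (val b) ≤ val (a + b)
  val_one : val 1 = 0
  val_nontrivial : ∃ a : K, a ≠ 0 ∧ val a ≠ 0
  res : K → 𝕜
  res_add : ∀ {a b : K}, (a = 0 ∨ 0 ≤ val a) → (b = 0 ∨ 0 ≤ val b) → res (a + b) = res a + res b
  res_mul : ∀ {a b : K}, (a = 0 ∨ 0 ≤ val a) → (b = 0 ∨ 0 ≤ val b) → res (a * b) = res a * res b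
  res_one : res 1 = 1
  res_zero : res 0 = 0
  res_eq_zero_iff : ∀ {a : K}, a ≠ 0 → 0 ≤ val a → (res a = 0 ↔ 0 < val a)
  res_surjective : ∀ c : 𝕜, ∃ a : K, (a = 0 ∨ 0 ≤ val a) ∧ res a = c
  t : ℝ → K
  t_ne_zero : ∀ {r : ℝ}, (∃ a : K, a ≠ 0 ∧ val a = r) → t r ≠ 0
  t_add : ∀ {r₁ r₂ : ℝ}, (∃ a : K, a ≠ 0 ∧ val a = r₁) → (∃ a : K, a ≠ 0 ∧ val a = r₂) →
    t (r₁ + r₂) = t r₁ * t r₂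
  val_t : ∀ {r : ℝ}, (∃ a : K, a ≠ 0 ∧ val a = r) → val (t r) = r

namespace ValSetup

variable {K 𝕜 : Type} [Field K] [Field 𝕜]

/-- The value group `Γ = val(K*) ⊆ ℝ`. -/
def Gamma (V : ValSetup K 𝕜) : Set ℝ := {r : ℝ | ∃ a : K, a ≠ 0 ∧ V.val a = r}

/-- `trop(f)(w) = min { val(c_u) + w·u : c_u ≠ 0 }` for `f = Σ_u c_u x^u ∈ K[x_0,…,x_{m-1}]`. -/
def trop (V : ValSetup K 𝕜) {m : ℕ} (f : MvPolynomial (Fin m) K) (w : Fin m → ℝ) : ℝ :=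
  sInf ((fun u => V.val (coeff u f) + dotN w u) '' (f.support : Set (Fin m →₀ ℕ)))

/-- The initial form `in_w(f) = Σ_{val(c_u)+w·u = trop(f)(w)} (t^{-val(c_u)} c_u)‾ x^u`
in `𝕜[x_0,…,x_{m-1}]`. -/
def initialForm (V : ValSetup K 𝕜) {m : ℕ} (w : Fin m → ℝ) (f : MvPolynomial (Fin m) K) :
    MvPolynomial (Fin m) 𝕜 :=
  ∑ u ∈ f.support.filter (fun u => V.val (coeff u f) + dotN w u = V.trop f w),
    monomial u (V.res (V.t (-(V.val (coeff u f))) * coeff u f))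

/-- The initial ideal `in_w(I) = ⟨in_w(f) : f ∈ I⟩ ⊆ 𝕜[x_0,…,x_{m-1}]`. -/
def initialIdeal (V : ValSetup K 𝕜) {m : ℕ} (w : Fin m → ℝ)
    (I : Ideal (MvPolynomial (Fin m) K)) : Ideal (MvPolynomial (Fin m) 𝕜) :=
  Ideal.span {g | ∃ f ∈ I, g = V.initialForm w f}

/-- The Gröbner region `C_I[w] = {w' ∈ Γ^m : in_{w'}(I) = in_w(I)}`. -/
def groebnerRegion (V : ValSetup K 𝕜) {m : ℕ} (I : Ideal (MvPolynomial (Fin m) K))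
    (w : Fin m → ℝ) : Set (Fin m → ℝ) :=
  {w' | (∀ i, w' i ∈ V.Gamma) ∧ V.initialIdeal w' I = V.initialIdeal w I}

end ValSetup

/-- `trop(g)(v) = min { v·u : c_u ≠ 0 }` for `g ∈ 𝕜[x]`, w.r.t. the trivial valuation on `𝕜`. -/
def tropTriv {𝕜 : Type} [Field 𝕜] {m : ℕ} (g : MvPolynomial (Fin m) 𝕜) (v : Fin m → ℝ) : ℝ :=
  sInf ((fun u => dotN v u) '' (g.support : Set (Fin m →₀ ℕ)))

/-- Initial form `in_v(g)`, w.r.t. the trivial valuation on the residue field: the sum of the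
terms of `g` whose exponents `u` minimize `v·u`. -/
def initialFormTriv {𝕜 : Type} [Field 𝕜] {m : ℕ} (v : Fin m → ℝ) (g : MvPolynomial (Fin m) 𝕜) :
    MvPolynomial (Fin m) 𝕜 :=
  ∑ u ∈ g.support.filter (fun u => dotN v u = tropTriv g v), monomial u (coeff u g)

/-- Initial ideal `in_v(J) = ⟨in_v(g) : g ∈ J⟩` w.r.t. the trivial valuation. -/
def initialIdealTriv {𝕜 : Type} [Field 𝕜] {m : ℕ} (v : Fin m → ℝ)
    (J : Ideal (MvPolynomial (Fin m) 𝕜)) : Ideal (MvPolynomial (Fin m) 𝕜) :=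
  Ideal.span {h | ∃ g ∈ J, h = initialFormTriv v g}

/-- A homogeneous ideal of `R[x_0,…,x_{m-1}]`: one containing all homogeneous components of
its elements. -/
def IsHomogIdeal {R : Type} [CommSemiring R] {m : ℕ} (I : Ideal (MvPolynomial (Fin m) R)) :
    Prop :=
  ∀ f ∈ I, ∀ d : ℕ, homogeneousComponent d f ∈ I

/-- A monomial ideal: an ideal generated by monomials. -/
def IsMonomialIdeal {R : Type} [CommSemiring R] {m : ℕ} (J : Ideal (MvPolynomial (Fin m) R)) :
    Prop :=
  ∃ S : Set (Fin m →₀ ℕ), J = Ideal.span ((fun u => (monomial u 1 : MvPolynomial (Fin m) R)) '' S)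

/-!
For a finite-dimensional `K`-space `W` of polynomials, the initial forms `in_w(f)`, `f ∈ W`,
span a `𝕜`-space of the same dimension. Indeed, after rescaling `f` so that `trop(f)(w) = 0`,
`in_w(f)` is the reduction modulo `𝔪` of `Σ t^{w·u} c_u x^u`; the polynomials of `W` with
`trop ≥ 0` form a lattice, and its reduction has the same rank: a `𝕜`-basis lifts to a
`K`-independent family, and conversely one peels off one dimension at a time by killing the
coefficient of a monomial on which some reduction does not vanish.
For a homogeneous ideal `I`, the degree-`d` part of `in_w(I)` is spanned by the initial forms of
`I_d`, so `dim in_w(I)_d = dim I_d` for every `w`. An inclusion between two initial ideals is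
therefore an equality in each degree.
-/

lemma dotN_add {m : ℕ} (w : Fin m → ℝ) (u v : Fin m →₀ ℕ) :
    dotN w (u + v) = dotN w u + dotN w v := by
  simp [dotN, mul_add, Finset.sum_add_distrib]

lemma Submodule.finrank_le_finrank_inf_ker_add_one {R M : Type*} [Field R] [AddCommGroup M]
    [Module R M] (W : Submodule R M) [FiniteDimensional R W] (φ : M →ₗ[R] R) :
    Module.finrank R W ≤ Module.finrank R ↥(W ⊓ LinearMap.ker φ) + 1 := by
  by_cases h : ∃ f ∈ W, φ f ≠ 0
  · obtain ⟨f, hfW, hf⟩ := h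
    have hsplit : W ≤ W ⊓ LinearMap.ker φ ⊔ span R {f} := fun x hx => by
      rw [← sub_add_cancel x ((φ x / φ f) • f)]
      refine add_mem (mem_sup_left ⟨sub_mem hx (smul_mem _ _ hfW), ?_⟩)
        (mem_sup_right (smul_mem _ _ (mem_span_singleton_self f)))
      simp [div_mul_cancel₀ _ hf]
    calc Module.finrank R W ≤ Module.finrank R ↥(W ⊓ LinearMap.ker φ ⊔ span R {f}) :=
          finrank_mono hsplit
      _ ≤ Module.finrank R ↥(W ⊓ LinearMap.ker φ) + Module.finrank R (span R {f}) :=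
          finrank_add_le_finrank_add_finrank _ _
      _ = _ := by rw [finrank_span_singleton fun h => hf (by rw [h, map_zero])]
  · simp only [not_exists, not_and, not_not] at h
    rw [inf_eq_left.2 fun x hx => h x hx]
    exact Nat.le_succ _

def Ideal.homogeneousPart {R σ : Type*} [CommSemiring R] (I : Ideal (MvPolynomial σ R))
    (d : ℕ) : Submodule R (MvPolynomial σ R) :=
  I.restrictScalars R ⊓ homogeneousSubmodule σ R d

instance Ideal.finiteDimensional_homogeneousPart {K σ : Type*} [Field K] [Finite σ]
    (I : Ideal (MvPolynomial σ K)) (d : ℕ) : FiniteDimensional K (I.homogeneousPart d) :=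
  have : FiniteDimensional K (homogeneousSubmodule σ K d) :=
    Module.Finite.iff_fg.2 (homogeneousSubmodule_fg _ _ d)
  Submodule.finiteDimensional_of_le inf_le_right

lemma Submodule.exists_le_restrictSupport {R σ : Type*} [CommRing R]
    (W : Submodule R (MvPolynomial σ R)) [Module.Finite R W] :
    ∃ T : Finset (σ →₀ ℕ), W ≤ restrictSupport R (T : Set (σ →₀ ℕ)) := by
  classical
  obtain ⟨S, rfl⟩ := Module.Finite.iff_fg.1 ‹_›
  refine ⟨S.biUnion support, span_le.2 fun f hf => ?_⟩
  exact Finset.coe_subset.2 (Finset.subset_biUnion_of_mem support hf)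

namespace ValSetup

variable {K 𝕜 : Type} [Field K] [Field 𝕜] (V : ValSetup K 𝕜) {m : ℕ}

lemma val_inv {a : K} (ha : a ≠ 0) : V.val a⁻¹ = -V.val a := by
  have h := V.val_mul ha (inv_ne_zero ha)
  rw [mul_inv_cancel₀ ha, V.val_one] at h
  linarith

def valueGroup : AddSubgroup ℝ where
  carrier := V.Gamma
  add_mem' := by
    rintro _ _ ⟨a, ha, rfl⟩ ⟨b, hb, rfl⟩
    exact ⟨a * b, mul_ne_zero ha hb, V.val_mul ha hb⟩
  zero_mem' := ⟨1, one_ne_zero, V.val_one⟩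
  neg_mem' := by
    rintro _ ⟨a, ha, rfl⟩
    exact ⟨a⁻¹, inv_ne_zero ha, V.val_inv ha⟩

lemma val_mem_Gamma {a : K} (ha : a ≠ 0) : V.val a ∈ V.Gamma := ⟨a, ha, rfl⟩

lemma dotN_mem_Gamma {w : Fin m → ℝ} (hw : ∀ i, w i ∈ V.Gamma) (u : Fin m →₀ ℕ) :
    dotN w u ∈ V.Gamma :=
  V.valueGroup.sum_mem fun i _ => by
    rw [mul_comm, ← nsmul_eq_mul]
    exact V.valueGroup.nsmul_mem (hw i) _

lemma t_zero : V.t 0 = 1 := by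
  have h0 : (0 : ℝ) ∈ V.Gamma := V.valueGroup.zero_mem
  have h := V.t_add h0 h0
  rw [add_zero] at h
  exact mul_left_cancel₀ (V.t_ne_zero h0) (h.symm.trans (mul_one _).symm)

lemma val_t_mul {r : ℝ} (hr : r ∈ V.Gamma) {a : K} (ha : a ≠ 0) :
    V.val (V.t r * a) = r + V.val a := by
  rw [V.val_mul (V.t_ne_zero hr) ha, V.val_t hr]

lemma res_eq_zero_of_val_pos {a : K} (hv : 0 < V.val a) : V.res a = 0 := by
  rcases eq_or_ne a 0 with rfl | ha
  · exact V.res_zero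
  · exact (V.res_eq_zero_iff ha hv.le).2 hv

lemma res_ne_zero_of_val_eq_zero {a : K} (ha : a ≠ 0) (hv : V.val a = 0) : V.res a ≠ 0 := by
  rw [Ne, V.res_eq_zero_iff ha hv.ge, hv]
  exact lt_irrefl 0

section trop

variable {w : Fin m → ℝ} {f : MvPolynomial (Fin m) K}

lemma trop_le {u : Fin m →₀ ℕ} (hu : u ∈ f.support) :
    V.trop f w ≤ V.val (coeff u f) + dotN w u :=
  csInf_le (f.support.finite_toSet.image _).bddBelow ⟨u, hu, rfl⟩

lemma exists_trop_eq (hf : f ≠ 0) :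
    ∃ u ∈ f.support, V.val (coeff u f) + dotN w u = V.trop f w := by
  obtain ⟨u, hu, he⟩ := ((Finset.coe_nonempty.2 (support_nonempty.2 hf)).image
    (fun u => V.val (coeff u f) + dotN w u)).csInf_mem (f.support.finite_toSet.image _)
  exact ⟨u, hu, he⟩

lemma trop_mem_Gamma (hw : ∀ i, w i ∈ V.Gamma) (hf : f ≠ 0) : V.trop f w ∈ V.Gamma := by
  obtain ⟨u, hu, he⟩ := V.exists_trop_eq (w := w) hf
  exact he ▸ V.valueGroup.add_mem (V.val_mem_Gamma (mem_support_iff.1 hu)) (V.dotN_mem_Gamma hw u)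

lemma trop_le_trop_of_coeff_eq {g : MvPolynomial (Fin m) K} (hg : g ≠ 0)
    (h : ∀ u ∈ g.support, coeff u g = coeff u f) : V.trop f w ≤ V.trop g w := by
  obtain ⟨u, hu, he⟩ := V.exists_trop_eq (w := w) hg
  have hu' : u ∈ f.support := by rw [mem_support_iff, ← h u hu]; exact mem_support_iff.1 hu
  rw [← he, h u hu]
  exact V.trop_le hu'

lemma trop_smul {a : K} (ha : a ≠ 0) (hf : f ≠ 0) : V.trop (a • f) w = V.val a + V.trop f w := by
  have hsupp : ∀ u, u ∈ (a • f).support ↔ u ∈ f.support := by simp [mem_support_iff, ha]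
  have hval : ∀ u ∈ f.support, V.val (coeff u (a • f)) = V.val a + V.val (coeff u f) :=
    fun u hu => by rw [coeff_smul, smul_eq_mul, V.val_mul ha (mem_support_iff.1 hu)]
  obtain ⟨u, hu, he⟩ := V.exists_trop_eq (w := w) hf
  obtain ⟨v, hv, he'⟩ := V.exists_trop_eq (w := w) (smul_ne_zero ha hf)
  have h₁ := V.trop_le (w := w) ((hsupp u).2 hu)
  have h₂ := V.trop_le (w := w) ((hsupp v).1 hv)
  rw [hval u hu] at h₁
  rw [hval v ((hsupp v).1 hv)] at he'
  linarith

lemma coeff_initialForm (u : Fin m →₀ ℕ) :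
    coeff u (V.initialForm w f) =
      if u ∈ f.support ∧ V.val (coeff u f) + dotN w u = V.trop f w then
        V.res (V.t (-V.val (coeff u f)) * coeff u f) else 0 := by
  simp only [initialForm, coeff_sum, coeff_monomial, Finset.sum_ite_eq', Finset.mem_filter]

lemma support_initialForm_subset : (V.initialForm w f).support ⊆ f.support := fun u hu => by
  rw [mem_support_iff, coeff_initialForm] at hu
  by_contra h
  exact hu (if_neg fun h' => h h'.1)

lemma initialForm_zero : V.initialForm w (0 : MvPolynomial (Fin m) K) = 0 := by
  rw [initialForm, support_zero, Finset.filter_empty, Finset.sum_empty]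

lemma initialForm_ne_zero (hf : f ≠ 0) : V.initialForm w f ≠ 0 := by
  obtain ⟨u, hu, hmin⟩ := V.exists_trop_eq (w := w) hf
  have hc := mem_support_iff.1 hu
  have hγ := V.valueGroup.neg_mem (V.val_mem_Gamma hc)
  refine ne_zero_iff.2 ⟨u, ?_⟩
  rw [coeff_initialForm, if_pos ⟨hu, hmin⟩]
  exact V.res_ne_zero_of_val_eq_zero (mul_ne_zero (V.t_ne_zero hγ) hc)
    (by rw [V.val_t_mul hγ hc]; ring)

end trop

section reduction

variable {w : Fin m → ℝ} {f g : MvPolynomial (Fin m) K}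

/-- The reduction modulo `𝔪` of the twisted polynomial `Σ t^{w·u} c_u x^u`. -/
def reduce (w : Fin m → ℝ) (f : MvPolynomial (Fin m) K) : MvPolynomial (Fin m) 𝕜 :=
  ∑ u ∈ f.support, monomial u (V.res (V.t (dotN w u) * coeff u f))

/-- `f` lies in the lattice `{trop(·)(w) ≥ 0}`, on which `reduce w` is semilinear. -/
def IsIntegralAt (w : Fin m → ℝ) (f : MvPolynomial (Fin m) K) : Prop :=
  ∀ u, coeff u f ≠ 0 → 0 ≤ V.val (coeff u f) + dotN w u

lemma coeff_reduce (u : Fin m →₀ ℕ) :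
    coeff u (V.reduce w f) = V.res (V.t (dotN w u) * coeff u f) := by
  simp only [reduce, coeff_sum, coeff_monomial, Finset.sum_ite_eq']
  split_ifs with hu
  · rfl
  · rw [notMem_support_iff.1 hu, mul_zero, V.res_zero]

lemma reduce_zero : V.reduce w (0 : MvPolynomial (Fin m) K) = 0 := by
  simp [reduce]

lemma support_reduce_subset : (V.reduce w f).support ⊆ f.support := fun u hu => by
  rw [mem_support_iff, coeff_reduce] at hu
  rw [mem_support_iff]
  rintro hc
  rw [hc, mul_zero, V.res_zero] at hu
  exact hu rfl

lemma isIntegralAt_zero : V.IsIntegralAt w 0 := fun u hu => absurd (coeff_zero u) hu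

lemma isIntegralAt_of_trop_nonneg (h : 0 ≤ V.trop f w) : V.IsIntegralAt w f :=
  fun _ hu => h.trans (V.trop_le (mem_support_iff.2 hu))

variable {V}

lemma IsIntegralAt.add (hf : V.IsIntegralAt w f) (hg : V.IsIntegralAt w g) :
    V.IsIntegralAt w (f + g) := fun u hu => by
  rw [coeff_add] at hu ⊢
  rcases eq_or_ne (coeff u f) 0 with hf0 | hf0
  · rw [hf0, zero_add] at hu ⊢
    exact hg u hu
  rcases eq_or_ne (coeff u g) 0 with hg0 | hg0
  · rw [hg0, add_zero] at hu ⊢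
    exact hf u hu
  have hmin : min (V.val (coeff u f) + dotN w u) (V.val (coeff u g) + dotN w u) ≤
      V.val (coeff u f + coeff u g) + dotN w u := by
    rw [min_add_add_right]
    linarith [V.val_add hf0 hg0 hu]
  exact (le_min (hf u hf0) (hg u hg0)).trans hmin

lemma IsIntegralAt.smul {a : K} (ha : a = 0 ∨ 0 ≤ V.val a) (hf : V.IsIntegralAt w f) :
    V.IsIntegralAt w (a • f) := fun u hu => by
  rw [coeff_smul, smul_eq_mul] at hu ⊢
  rw [V.val_mul (left_ne_zero_of_mul hu) (right_ne_zero_of_mul hu)]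
  have := hf u (right_ne_zero_of_mul hu)
  have := ha.resolve_left (left_ne_zero_of_mul hu)
  linarith

lemma IsIntegralAt.trop_nonneg (hf : V.IsIntegralAt w f) (hf0 : f ≠ 0) : 0 ≤ V.trop f w := by
  obtain ⟨u, hu, he⟩ := V.exists_trop_eq (w := w) hf0
  exact he ▸ hf u (mem_support_iff.1 hu)

lemma IsIntegralAt.t_mul_coeff (hw : ∀ i, w i ∈ V.Gamma) (hf : V.IsIntegralAt w f)
    (u : Fin m →₀ ℕ) :
    V.t (dotN w u) * coeff u f = 0 ∨ 0 ≤ V.val (V.t (dotN w u) * coeff u f) := by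
  rcases eq_or_ne (coeff u f) 0 with hc | hc
  · exact Or.inl (by rw [hc, mul_zero])
  · right
    rw [V.val_t_mul (V.dotN_mem_Gamma hw u) hc]
    linarith [hf u hc]

lemma reduce_add (hw : ∀ i, w i ∈ V.Gamma) (hf : V.IsIntegralAt w f) (hg : V.IsIntegralAt w g) :
    V.reduce w (f + g) = V.reduce w f + V.reduce w g := by
  ext u
  rw [coeff_add, coeff_reduce, coeff_reduce, coeff_reduce, coeff_add, mul_add]
  exact V.res_add (hf.t_mul_coeff hw u) (hg.t_mul_coeff hw u)

lemma reduce_smul (hw : ∀ i, w i ∈ V.Gamma) {a : K} (ha : a = 0 ∨ 0 ≤ V.val a)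
    (hf : V.IsIntegralAt w f) : V.reduce w (a • f) = V.res a • V.reduce w f := by
  ext u
  rw [coeff_smul, coeff_reduce, coeff_reduce, coeff_smul, smul_eq_mul, smul_eq_mul,
    mul_left_comm]
  exact V.res_mul ha (hf.t_mul_coeff hw u)

variable (V)

lemma isIntegralAt_sum {ι : Type*} (s : Finset ι) (f : ι → MvPolynomial (Fin m) K)
    (hf : ∀ i ∈ s, V.IsIntegralAt w (f i)) : V.IsIntegralAt w (∑ i ∈ s, f i) :=
  Finset.sum_induction _ (V.IsIntegralAt w) (fun _ _ => IsIntegralAt.add) V.isIntegralAt_zero hf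

lemma reduce_sum (hw : ∀ i, w i ∈ V.Gamma) {ι : Type*} (s : Finset ι)
    (f : ι → MvPolynomial (Fin m) K) (hf : ∀ i ∈ s, V.IsIntegralAt w (f i)) :
    V.reduce w (∑ i ∈ s, f i) = ∑ i ∈ s, V.reduce w (f i) := by
  classical
  induction s using Finset.induction_on with
  | empty => simp [reduce_zero]
  | insert a s ha ih =>
    rw [Finset.forall_mem_insert] at hf
    rw [Finset.sum_insert ha, Finset.sum_insert ha,
      V.reduce_add hw hf.1 (V.isIntegralAt_sum s f hf.2), ih hf.2]

lemma initialForm_eq_reduce (hw : ∀ i, w i ∈ V.Gamma) (hf : f ≠ 0) :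
    V.initialForm w f = V.reduce w (V.t (-V.trop f w) • f) := by
  have hγ : -V.trop f w ∈ V.Gamma := V.valueGroup.neg_mem (V.trop_mem_Gamma hw hf)
  ext u
  rw [coeff_initialForm, coeff_reduce, coeff_smul, smul_eq_mul]
  by_cases hu : u ∈ f.support
  swap
  · rw [if_neg fun h => hu h.1, notMem_support_iff.1 hu, mul_zero, mul_zero, V.res_zero]
  have hc : coeff u f ≠ 0 := mem_support_iff.1 hu
  have hγu : dotN w u + -V.trop f w ∈ V.Gamma := V.valueGroup.add_mem (V.dotN_mem_Gamma hw u) hγ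
  rw [← mul_assoc, ← V.t_add (V.dotN_mem_Gamma hw u) hγ]
  by_cases hmin : V.val (coeff u f) + dotN w u = V.trop f w
  · rw [if_pos ⟨hu, hmin⟩, show dotN w u + -V.trop f w = -V.val (coeff u f) by linarith]
  · rw [if_neg fun h => hmin h.2]
    refine (V.res_eq_zero_of_val_pos ?_).symm
    rw [V.val_t_mul hγu hc]
    linarith [lt_of_le_of_ne (V.trop_le (w := w) hu) (Ne.symm hmin)]

lemma reduce_eq_zero_of_trop_pos (hw : ∀ i, w i ∈ V.Gamma) (h : 0 < V.trop f w) :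
    V.reduce w f = 0 := by
  ext u
  rw [coeff_reduce, coeff_zero]
  rcases eq_or_ne (coeff u f) 0 with hc | hc
  · rw [hc, mul_zero, V.res_zero]
  · refine V.res_eq_zero_of_val_pos ?_
    rw [V.val_t_mul (V.dotN_mem_Gamma hw u) hc]
    linarith [V.trop_le (w := w) (mem_support_iff.2 hc)]

lemma reduce_eq_initialForm_of_trop_eq_zero (hw : ∀ i, w i ∈ V.Gamma) (hf : f ≠ 0)
    (h : V.trop f w = 0) : V.reduce w f = V.initialForm w f := by
  rw [V.initialForm_eq_reduce hw hf, h, neg_zero, V.t_zero, one_smul]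

lemma linearIndependent_of_reduce (hw : ∀ i, w i ∈ V.Gamma) {ι : Type*} [Fintype ι]
    {f : ι → MvPolynomial (Fin m) K} (hf : ∀ i, V.IsIntegralAt w (f i))
    (hli : LinearIndependent 𝕜 (V.reduce w ∘ f)) :
    LinearIndependent K f := by
  classical
  rw [Fintype.linearIndependent_iff] at hli ⊢
  intro g hg
  by_contra! hne
  obtain ⟨j, hj, hjmin⟩ := Finset.exists_min_image {i | g i ≠ 0} (fun i => V.val (g i))
    (by obtain ⟨i, hi⟩ := hne; exact ⟨i, by simpa using hi⟩)
  replace hj : g j ≠ 0 := by simpa using hj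
  -- dividing by a coefficient of least valuation makes all coefficients integral, one a unit
  set c : ι → K := fun i => (g j)⁻¹ * g i with hc
  have hcint : ∀ i, c i = 0 ∨ 0 ≤ V.val (c i) := fun i => by
    rcases eq_or_ne (g i) 0 with hgi | hgi
    · simp [hc, hgi]
    · right
      rw [hc, V.val_mul (inv_ne_zero hj) hgi, V.val_inv hj]
      linarith [hjmin i (by simpa using hgi)]
  have hcsum : ∑ i, c i • f i = 0 := by
    simp only [hc, mul_smul, ← Finset.smul_sum, hg, smul_zero]
  have hres : ∑ i, V.res (c i) • (V.reduce w ∘ f) i = 0 := by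
    rw [← V.reduce_zero (w := w), ← hcsum, V.reduce_sum hw _ _ fun i _ => (hf i).smul (hcint i)]
    exact Finset.sum_congr rfl fun i _ => (V.reduce_smul hw (hcint i) (hf i)).symm
  have hcj : c j = 1 := inv_mul_cancel₀ hj
  have := hli _ hres j
  rw [hcj, V.res_one] at this
  exact one_ne_zero this

def reduction (w : Fin m → ℝ) (hw : ∀ i, w i ∈ V.Gamma)
    (W : Submodule K (MvPolynomial (Fin m) K)) : Submodule 𝕜 (MvPolynomial (Fin m) 𝕜) where
  carrier := {g | ∃ f ∈ W, V.IsIntegralAt w f ∧ V.reduce w f = g}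
  zero_mem' := ⟨0, W.zero_mem, V.isIntegralAt_zero, V.reduce_zero⟩
  add_mem' := by
    rintro _ _ ⟨f, hfW, hf, rfl⟩ ⟨g, hgW, hg, rfl⟩
    exact ⟨f + g, W.add_mem hfW hgW, hf.add hg, V.reduce_add hw hf hg⟩
  smul_mem' := by
    rintro c _ ⟨f, hfW, hf, rfl⟩
    obtain ⟨a, ha, rfl⟩ := V.res_surjective c
    exact ⟨a • f, W.smul_mem a hfW, hf.smul ha, V.reduce_smul hw ha hf⟩

variable {hw : ∀ i, w i ∈ V.Gamma} {W : Submodule K (MvPolynomial (Fin m) K)}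

lemma mem_reduction {g : MvPolynomial (Fin m) 𝕜} :
    g ∈ V.reduction w hw W ↔ ∃ f ∈ W, V.IsIntegralAt w f ∧ V.reduce w f = g := Iff.rfl

lemma initialForm_mem_reduction (hfW : f ∈ W) : V.initialForm w f ∈ V.reduction w hw W := by
  rcases eq_or_ne f 0 with rfl | hf
  · rw [initialForm_zero]
    exact zero_mem _
  have hγ : -V.trop f w ∈ V.Gamma := V.valueGroup.neg_mem (V.trop_mem_Gamma hw hf)
  refine ⟨_, W.smul_mem _ hfW, V.isIntegralAt_of_trop_nonneg ?_,
    (V.initialForm_eq_reduce hw hf).symm⟩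
  rw [V.trop_smul (V.t_ne_zero hγ) hf, V.val_t hγ, neg_add_cancel]

lemma reduction_eq_span_initialForm :
    V.reduction w hw W = Submodule.span 𝕜 (V.initialForm w '' W) := by
  refine le_antisymm ?_ (Submodule.span_le.2 ?_)
  · rintro _ ⟨f, hfW, hf, rfl⟩
    rcases eq_or_ne f 0 with rfl | hf0
    · rw [reduce_zero]
      exact zero_mem _
    rcases (hf.trop_nonneg hf0).lt_or_eq with hpos | hzero
    · rw [V.reduce_eq_zero_of_trop_pos hw hpos]
      exact zero_mem _
    · rw [V.reduce_eq_initialForm_of_trop_eq_zero hw hf0 hzero.symm]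
      exact Submodule.subset_span ⟨f, hfW, rfl⟩
  · rintro _ ⟨f, hfW, rfl⟩
    exact V.initialForm_mem_reduction hfW

instance finiteDimensional_reduction [FiniteDimensional K W] :
    FiniteDimensional 𝕜 (V.reduction w hw W) := by
  obtain ⟨T, hT⟩ := W.exists_le_restrictSupport
  have : FiniteDimensional 𝕜 (restrictSupport 𝕜 (T : Set (Fin m →₀ ℕ))) :=
    .of_basis (basisRestrictSupport 𝕜 _)
  have hle : V.reduction w hw W ≤ restrictSupport 𝕜 (T : Set (Fin m →₀ ℕ)) := by
    rintro _ ⟨f, hfW, -, rfl⟩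
    exact (Finset.coe_subset.2 V.support_reduce_subset).trans (hT hfW)
  exact Submodule.finiteDimensional_of_le hle

lemma finrank_reduction_le [FiniteDimensional K W] :
    Module.finrank 𝕜 (V.reduction w hw W) ≤ Module.finrank K W := by
  let b := Module.finBasis 𝕜 (V.reduction w hw W)
  choose f hfW hf hred using fun i => V.mem_reduction.1 (b i).2
  have hli : LinearIndependent 𝕜 (V.reduce w ∘ f) := by
    rw [show V.reduce w ∘ f = (V.reduction w hw W).subtype ∘ b from funext hred]
    exact b.linearIndependent.map' _ (Submodule.ker_subtype _)
  have hliW : LinearIndependent K fun i => (⟨f i, hfW i⟩ : W) :=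
    LinearIndependent.of_comp W.subtype (V.linearIndependent_of_reduce hw hf hli)
  simpa using hliW.fintype_card_le_finrank

lemma reduction_ne_bot (hW : W ≠ ⊥) : V.reduction w hw W ≠ ⊥ := fun h => by
  obtain ⟨f, hfW, hf⟩ := Submodule.exists_mem_ne_zero_of_ne_bot hW
  have hmem := V.initialForm_mem_reduction (hw := hw) hfW
  rw [h, Submodule.mem_bot] at hmem
  exact V.initialForm_ne_zero hf hmem

lemma reduction_inf_ker_lcoeff_le (u : Fin m →₀ ℕ) :
    V.reduction w hw (W ⊓ LinearMap.ker (lcoeff K u)) ≤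
      V.reduction w hw W ⊓ LinearMap.ker (lcoeff 𝕜 u) := by
  rintro _ ⟨f, ⟨hfW, hfu⟩, hf, rfl⟩
  refine ⟨⟨f, hfW, hf, rfl⟩, ?_⟩
  simp only [SetLike.mem_coe, LinearMap.mem_ker, lcoeff_apply, coeff_reduce] at hfu ⊢
  rw [hfu, mul_zero, V.res_zero]

lemma finrank_le_finrank_reduction [FiniteDimensional K W] :
    Module.finrank K W ≤ Module.finrank 𝕜 (V.reduction w hw W) := by
  induction hn : Module.finrank K W using Nat.strong_induction_on generalizing W with
  | _ n ih =>
  rcases eq_or_ne W ⊥ with rfl | hW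
  · rw [← hn, finrank_bot]
    exact Nat.zero_le _
  obtain ⟨_, ⟨f, hfW, hf, rfl⟩, hne⟩ :=
    Submodule.exists_mem_ne_zero_of_ne_bot (V.reduction_ne_bot (hw := hw) hW)
  obtain ⟨u, hu⟩ := ne_zero_iff.1 hne
  have hfu : coeff u f ≠ 0 :=
    mem_support_iff.1 (V.support_reduce_subset (mem_support_iff.2 hu))
  set W' := W ⊓ LinearMap.ker (lcoeff K u)
  have hW' : W' < W := inf_le_left.lt_of_ne fun h => hfu (by rw [← h] at hfW; exact hfW.2)
  have hred : V.reduction w hw W ⊓ LinearMap.ker (lcoeff 𝕜 u) < V.reduction w hw W := by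
    refine inf_le_left.lt_of_ne fun h => hu ?_
    have hmem : V.reduce w f ∈ V.reduction w hw W := ⟨f, hfW, hf, rfl⟩
    rw [← h] at hmem
    exact hmem.2
  have h₁ : Module.finrank K W ≤ Module.finrank K W' + 1 :=
    W.finrank_le_finrank_inf_ker_add_one (lcoeff K u)
  have h₂ := ih _ (hn ▸ Submodule.finrank_lt_finrank_of_lt hW') (W := W') rfl
  have h₃ : Module.finrank 𝕜 (V.reduction w hw W') ≤
      Module.finrank 𝕜 ↥(V.reduction w hw W ⊓ LinearMap.ker (lcoeff 𝕜 u)) :=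
    Submodule.finrank_mono (V.reduction_inf_ker_lcoeff_le u)
  have h₄ := Submodule.finrank_lt_finrank_of_lt hred
  omega

lemma finrank_span_initialForm (hw : ∀ i, w i ∈ V.Gamma)
    (W : Submodule K (MvPolynomial (Fin m) K)) [FiniteDimensional K W] :
    Module.finrank 𝕜 (Submodule.span 𝕜 (V.initialForm w '' W)) = Module.finrank K W := by
  rw [← V.reduction_eq_span_initialForm (hw := hw)]
  exact V.finrank_reduction_le.antisymm V.finrank_le_finrank_reduction

lemma finiteDimensional_span_initialForm (hw : ∀ i, w i ∈ V.Gamma)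
    (W : Submodule K (MvPolynomial (Fin m) K)) [FiniteDimensional K W] :
    FiniteDimensional 𝕜 (Submodule.span 𝕜 (V.initialForm w '' W)) :=
  V.reduction_eq_span_initialForm (hw := hw) ▸ inferInstance

end reduction

section homogeneous

variable {w : Fin m → ℝ} {f : MvPolynomial (Fin m) K} {I : Ideal (MvPolynomial (Fin m) K)}

lemma initialForm_isHomogeneous {e : ℕ} (hf : f.IsHomogeneous e) :
    (V.initialForm w f).IsHomogeneous e := fun _ hu =>
  hf (mem_support_iff.1 (V.support_initialForm_subset (mem_support_iff.2 hu)))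

lemma trop_monomial_one_mul (α : Fin m →₀ ℕ) (hf : f ≠ 0) :
    V.trop (monomial α 1 * f) w = dotN w α + V.trop f w := by
  have hcoeff : ∀ u, coeff (α + u) (monomial α 1 * f) = coeff u f := fun u => by
    rw [coeff_monomial_mul, one_mul]
  obtain ⟨u, hu, he⟩ := V.exists_trop_eq (w := w) hf
  have hu' : α + u ∈ (monomial α 1 * f).support := by
    rw [mem_support_iff, hcoeff]
    exact mem_support_iff.1 hu
  obtain ⟨x, hx, hx'⟩ := V.exists_trop_eq (w := w) (ne_zero_iff.2 ⟨_, mem_support_iff.1 hu'⟩)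
  obtain ⟨v, rfl⟩ : ∃ v, x = α + v := by
    have hx0 := mem_support_iff.1 hx
    rw [coeff_monomial_mul'] at hx0
    split_ifs at hx0 with hαx
    · exact exists_add_of_le hαx
    · exact absurd rfl hx0
  have h₁ := V.trop_le (w := w) hu'
  have h₂ := V.trop_le (w := w) (f := f) (u := v)
    (by rw [mem_support_iff, ← hcoeff]; exact mem_support_iff.1 hx)
  rw [hcoeff, dotN_add] at h₁ hx'
  linarith

lemma initialForm_monomial_one_mul (α : Fin m →₀ ℕ) (f : MvPolynomial (Fin m) K) :
    V.initialForm w (monomial α 1 * f) = monomial α 1 * V.initialForm w f := by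
  rcases eq_or_ne f 0 with rfl | hf
  · rw [mul_zero, initialForm_zero, mul_zero]
  ext x
  rw [coeff_monomial_mul']
  split_ifs with hαx
  · obtain ⟨u, rfl⟩ := exists_add_of_le hαx
    simp only [add_tsub_cancel_left, one_mul, coeff_initialForm, mem_support_iff,
      coeff_monomial_mul, dotN_add, V.trop_monomial_one_mul α hf, add_left_comm (V.val _),
      add_right_inj]
  · rw [coeff_initialForm, if_neg]
    rintro ⟨hx, -⟩
    rw [mem_support_iff, coeff_monomial_mul', if_neg hαx] at hx
    exact hx rfl

lemma homogeneousComponent_initialForm (e : ℕ) (f : MvPolynomial (Fin m) K) :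
    homogeneousComponent e (V.initialForm w f) =
      if V.trop (homogeneousComponent e f) w = V.trop f w then
        V.initialForm w (homogeneousComponent e f) else 0 := by
  ext u
  rw [coeff_homogeneousComponent]
  by_cases hu : u.degree = e
  swap
  · rw [if_neg hu]
    split_ifs
    · exact ((V.initialForm_isHomogeneous
        (homogeneousComponent_isHomogeneous e f)).coeff_eq_zero hu).symm
    · exact (coeff_zero u).symm
  have hcoeff : coeff u (homogeneousComponent e f) = coeff u f := by
    rw [coeff_homogeneousComponent, if_pos hu]
  rw [if_pos hu]
  split_ifs with htrop
  · simp only [coeff_initialForm, mem_support_iff, hcoeff, htrop]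
  rw [coeff_zero, coeff_initialForm, if_neg]
  rintro ⟨hsupp, hmin⟩
  have hsupp' : u ∈ (homogeneousComponent e f).support := by
    rwa [mem_support_iff, hcoeff, ← mem_support_iff]
  have hne : homogeneousComponent e f ≠ 0 := ne_zero_iff.2 ⟨u, mem_support_iff.1 hsupp'⟩
  refine htrop (le_antisymm ?_ (V.trop_le_trop_of_coeff_eq hne fun v hv => ?_))
  · rw [← hmin, ← hcoeff]
    exact V.trop_le hsupp'
  · rw [coeff_homogeneousComponent, if_pos]
    by_contra hv'
    exact mem_support_iff.1 hv (by rw [coeff_homogeneousComponent, if_neg hv'])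

lemma mul_mem_span_initialForm (p : MvPolynomial (Fin m) 𝕜) {g : MvPolynomial (Fin m) 𝕜}
    (hg : g ∈ Submodule.span 𝕜 (V.initialForm w '' {f | f ∈ I ∧ ∃ d, f.IsHomogeneous d})) :
    p * g ∈ Submodule.span 𝕜 (V.initialForm w '' {f | f ∈ I ∧ ∃ d, f.IsHomogeneous d}) := by
  induction p using MvPolynomial.induction_on' with
  | monomial α c =>
    rw [show monomial α c * g = c • (monomial α 1 * g) by
      rw [← smul_mul_assoc, smul_monomial, smul_eq_mul, mul_one]]
    refine Submodule.smul_mem _ c ?_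
    induction hg using Submodule.span_induction with
    | mem _ hx =>
      obtain ⟨f, ⟨hfI, d, hd⟩, rfl⟩ := hx
      rw [← initialForm_monomial_one_mul]
      exact Submodule.subset_span ⟨_, ⟨I.mul_mem_left _ hfI, _,
        (isHomogeneous_monomial _ rfl).mul hd⟩, rfl⟩
    | zero => rw [mul_zero]; exact zero_mem _
    | add _ _ _ _ hx hy => rw [mul_add]; exact add_mem hx hy
    | smul a _ _ hx => rw [mul_smul_comm]; exact Submodule.smul_mem _ a hx
  | add p q hp hq => rw [add_mul]; exact add_mem hp hq

lemma mem_span_initialForm_of_mem_initialIdeal (hI : IsHomogIdeal I)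
    {h : MvPolynomial (Fin m) 𝕜} (hh : h ∈ V.initialIdeal w I) :
    h ∈ Submodule.span 𝕜 (V.initialForm w '' {f | f ∈ I ∧ ∃ d, f.IsHomogeneous d}) := by
  induction hh using Submodule.span_induction with
  | mem _ hx =>
    obtain ⟨f, hfI, rfl⟩ := hx
    rw [← sum_homogeneousComponent (V.initialForm w f)]
    refine sum_mem fun e _ => ?_
    rw [homogeneousComponent_initialForm]
    split_ifs
    · exact Submodule.subset_span
        ⟨_, ⟨hI f hfI e, e, homogeneousComponent_isHomogeneous e f⟩, rfl⟩
    · exact zero_mem _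
  | zero => exact zero_mem _
  | add _ _ _ _ hx hy => exact add_mem hx hy
  | smul a _ _ hx => exact V.mul_mem_span_initialForm a hx

lemma span_initialForm_homogeneousPart_le_homogeneousSubmodule (d : ℕ) :
    Submodule.span 𝕜 (V.initialForm w '' I.homogeneousPart d) ≤
      homogeneousSubmodule (Fin m) 𝕜 d :=
  Submodule.span_le.2 fun _ ⟨_, hf, hg⟩ => hg ▸ V.initialForm_isHomogeneous hf.2

lemma span_initialForm_homogeneousPart_le_initialIdeal (d : ℕ) :
    Submodule.span 𝕜 (V.initialForm w '' I.homogeneousPart d) ≤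
      (V.initialIdeal w I).restrictScalars 𝕜 :=
  Submodule.span_le.2 fun _ ⟨f, hf, hg⟩ => Ideal.subset_span ⟨f, hf.1, hg.symm⟩

lemma mem_initialIdeal_iff (hI : IsHomogIdeal I) {h : MvPolynomial (Fin m) 𝕜} :
    h ∈ V.initialIdeal w I ↔
      ∀ d, homogeneousComponent d h ∈
        Submodule.span 𝕜 (V.initialForm w '' I.homogeneousPart d) := by
  refine ⟨fun hh d => ?_, fun hd => ?_⟩
  · have hspan := V.mem_span_initialForm_of_mem_initialIdeal hI hh
    clear hh
    induction hspan using Submodule.span_induction with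
    | mem _ hx =>
      obtain ⟨f, ⟨hfI, e, he⟩, rfl⟩ := hx
      rw [homogeneousComponent_of_mem (V.initialForm_isHomogeneous (w := w) he)]
      split_ifs with hde
      · exact Submodule.subset_span ⟨f, ⟨hfI, hde ▸ he⟩, rfl⟩
      · exact zero_mem _
    | zero => rw [map_zero]; exact zero_mem _
    | add _ _ _ _ hx hy => rw [map_add]; exact add_mem hx hy
    | smul a _ _ hx => rw [map_smul]; exact Submodule.smul_mem _ a hx
  · rw [← sum_homogeneousComponent h]
    exact sum_mem fun d _ => V.span_initialForm_homogeneousPart_le_initialIdeal d (hd d)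

theorem initialIdeal_eq_of_le (hI : IsHomogIdeal I) {w₁ w₂ : Fin m → ℝ}
    (hw₁ : ∀ i, w₁ i ∈ V.Gamma) (hw₂ : ∀ i, w₂ i ∈ V.Gamma)
    (hle : V.initialIdeal w₂ I ≤ V.initialIdeal w₁ I) :
    V.initialIdeal w₂ I = V.initialIdeal w₁ I := by
  refine hle.antisymm fun h hh => (V.mem_initialIdeal_iff hI).2 fun d => ?_
  have hspan : Submodule.span 𝕜 (V.initialForm w₂ '' I.homogeneousPart d) ≤
      Submodule.span 𝕜 (V.initialForm w₁ '' I.homogeneousPart d) := fun g hg => by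
    have hg₁ := (V.mem_initialIdeal_iff hI).1
      (hle (V.span_initialForm_homogeneousPart_le_initialIdeal d hg)) d
    rwa [homogeneousComponent_of_mem
      (V.span_initialForm_homogeneousPart_le_homogeneousSubmodule d hg), if_pos rfl] at hg₁
  have := V.finiteDimensional_span_initialForm hw₁ (I.homogeneousPart d)
  have heq := Submodule.eq_of_le_of_finrank_eq hspan
    (by rw [V.finrank_span_initialForm hw₁, V.finrank_span_initialForm hw₂])
  exact heq ▸ (V.mem_initialIdeal_iff hI).1 hh d

end homogeneous

end ValSetup

theorem monomial_initialIdeal_not_ssubset_general {K 𝕜 : Type} [Field K] [Field 𝕜] (V : ValSetup K 𝕜)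
    {n : ℕ} (I : Ideal (MvPolynomial (Fin (n+1)) K)) (hI : IsHomogIdeal I)
    (w₁ w₂ : Fin (n+1) → ℝ) (hw₁ : ∀ i, w₁ i ∈ V.Gamma) (hw₂ : ∀ i, w₂ i ∈ V.Gamma) :
    ¬ (V.initialIdeal w₂ I < V.initialIdeal w₁ I) := fun hlt =>
  hlt.ne (V.initialIdeal_eq_of_le hI hw₁ hw₂ hlt.le)

/-- (From the proof of Proposition 3.5, via [Maclagan, Antichains].)  If `in_{w₁}(I)` and
`in_{w₂}(I)` are both monomial initial ideals of a homogeneous ideal `I ⊆ K[x_0,…,x_n]`,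
then `in_{w₂}(I)` is not strictly contained in `in_{w₁}(I)`. -/
theorem monomial_initialIdeal_not_ssubset {K 𝕜 : Type} [Field K] [Field 𝕜] (V : ValSetup K 𝕜)
    (hdense : Dense V.Gamma) (hQ : ∀ q : ℚ, (q : ℝ) ∈ V.Gamma) {n : ℕ}
    (I : Ideal (MvPolynomial (Fin (n+1)) K)) (hI : IsHomogIdeal I)
    (w₁ w₂ : Fin (n+1) → ℝ) (hw₁ : ∀ i, w₁ i ∈ V.Gamma) (hw₂ : ∀ i, w₂ i ∈ V.Gamma)
    (hm₁ : IsMonomialIdeal (V.initialIdeal w₁ I))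
    (hm₂ : IsMonomialIdeal (V.initialIdeal w₂ I)) :
    ¬ (V.initialIdeal w₂ I < V.initialIdeal w₁ I) :=
  monomial_initialIdeal_not_ssubset_general V I hI w₁ w₂ hw₁ hw₂
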